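/- arXiv:1204.6525 — 3 statements merged into one kernel-verified Lean document; each statement's English description precedes it below -/
import Mathlib

section
/- Let S_1,…,S_K be bounded operators on a Hilbert space with ‖S_m‖ ≤ 1. Define μ_m = sup over i_m,…,i_K ∈ {0,1} of ‖(S_{m,i_m}S*_{m,i_m})[(S_{m+1,i_{m+1}}S*_{m+1,i_{m+1}}) + … + (S_{K,i_K}S*_{K,i_K})]‖ and D = sup over i_1,…,i_K of ‖S_{1,i_1}S*_{1,i_1} + … + S_{K,i_K}S*_{K,i_K}‖, where S_{m,0} = S_m, S_{m,1} = 0. Then for each m, the quantity ν_m = sup over i_m,…,i_K of ‖S*_{m,i_m}[(S_{m+1,i_{m+1}}S*_{m+1,i_{m+1}}) + … + (S_{K,i_K}S*_{K,i_K})]‖ satisfies ν_m² ≤ D·μ_m. -/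
/-!
Fix a choice `i` attaining `ν_m`, and put `T = S_{m,i_m}` and `A = ∑_{n > m} S_{n,i_n} S_{n,i_n}^*`.
Since `A` is self-adjoint, the C⋆-identity gives `‖T^* A‖² = ‖A (T T^*) A‖ ≤ ‖A‖ ‖T T^* A‖`.
The second factor is at most `μ_m`, and `‖A‖ ≤ D` because `A` is the full sum for the choice that
agrees with `i` above `m` and switches every other operator off.
-/

open scoped BigOperators

variable {H : Type*} [NormedAddCommGroup H] [InnerProductSpace ℂ H] [CompleteSpace H]

/-- `S_{m,0} = S_m`, `S_{m,1} = 0`. -/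
def sel {K : ℕ} (S : Fin K → H →L[ℂ] H) (i : Fin K → Bool) (m : Fin K) : H →L[ℂ] H :=
  if i m then 0 else S m

open ContinuousLinearMap Finset

theorem norm_star_mul_sq_le_of_isSelfAdjoint {E : Type*} [NonUnitalNormedRing E] [StarRing E]
    [CStarRing E] {a : E} (ha : IsSelfAdjoint a) (t : E) :
    ‖star t * a‖ ^ 2 ≤ ‖a‖ * ‖t * star t * a‖ :=
  calc ‖star t * a‖ ^ 2 = ‖a * (t * star t * a)‖ := by
        rw [sq, ← CStarRing.norm_star_mul_self, star_mul, star_star, ha.star_eq]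
        simp only [mul_assoc]
    _ ≤ ‖a‖ * ‖t * star t * a‖ := norm_mul_le _ _

theorem isSelfAdjoint_sum_mul_adjoint {ι : Type*} (s : Finset ι) (T : ι → H →L[ℂ] H) :
    IsSelfAdjoint (∑ n ∈ s, T n * adjoint (T n)) :=
  isSelfAdjoint_sum s fun n _ => IsSelfAdjoint.mul_star_self (T n)

theorem sum_sel_mul_adjoint_eq_sum_filter {K : ℕ} (S : Fin K → H →L[ℂ] H) (i : Fin K → Bool)
    (p : Fin K → Prop) [DecidablePred p] :
    ∑ n, sel S (fun n => if p n then i n else true) n *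
        adjoint (sel S (fun n => if p n then i n else true) n)
      = ∑ n ∈ univ.filter p, sel S i n * adjoint (sel S i n) := by
  rw [sum_filter]
  refine sum_congr rfl fun n _ => ?_
  by_cases hn : p n <;> simp [sel, hn]

theorem stmt4_general (K : ℕ) (S : Fin K → H →L[ℂ] H) (m : Fin K) :
    (⨆ i : Fin K → Bool,
        ‖ContinuousLinearMap.adjoint (sel S i m) *
            ∑ n ∈ Finset.univ.filter (fun n => m < n),
              sel S i n * ContinuousLinearMap.adjoint (sel S i n)‖) ^ 2
      ≤ (⨆ i : Fin K → Bool, ‖∑ n, sel S i n * ContinuousLinearMap.adjoint (sel S i n)‖) *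
        (⨆ i : Fin K → Bool,
          ‖(sel S i m * ContinuousLinearMap.adjoint (sel S i m)) *
              ∑ n ∈ Finset.univ.filter (fun n => m < n),
                sel S i n * ContinuousLinearMap.adjoint (sel S i n)‖) := by
  obtain ⟨i, hi⟩ := exists_eq_ciSup_of_finite (f := fun i : Fin K → Bool =>
    ‖adjoint (sel S i m) * ∑ n ∈ univ.filter (fun n => m < n), sel S i n * adjoint (sel S i n)‖)
  rw [← hi]
  set A := ∑ n ∈ univ.filter (fun n => m < n), sel S i n * adjoint (sel S i n) with hA_def
  have hA : ‖A‖ ≤ ⨆ i : Fin K → Bool, ‖∑ n, sel S i n * adjoint (sel S i n)‖ := by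
    rw [hA_def, ← sum_sel_mul_adjoint_eq_sum_filter S i (fun n => m < n)]
    exact le_ciSup (f := fun j : Fin K → Bool => ‖∑ n, sel S j n * adjoint (sel S j n)‖)
      (Set.finite_range _).bddAbove _
  have hTA := le_ciSup (f := fun j : Fin K → Bool => ‖sel S j m * adjoint (sel S j m) *
      ∑ n ∈ univ.filter (fun n => m < n), sel S j n * adjoint (sel S j n)‖)
    (Set.finite_range _).bddAbove i
  calc ‖adjoint (sel S i m) * A‖ ^ 2 ≤ ‖A‖ * ‖sel S i m * adjoint (sel S i m) * A‖ :=
        norm_star_mul_sq_le_of_isSelfAdjoint (isSelfAdjoint_sum_mul_adjoint _ _) _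
    _ ≤ _ := mul_le_mul hA hTA (norm_nonneg _) ((norm_nonneg _).trans hA)

/-- with `D`, `μ_m`, `ν_m` as defined via suprema over the choices `i ∈ {0,1}`,
one has `ν_m² ≤ D · μ_m` for each `m`. -/
theorem stmt4 (K : ℕ) (S : Fin K → H →L[ℂ] H) (hS : ∀ m, ‖S m‖ ≤ 1) (m : Fin K) :
    (⨆ i : Fin K → Bool,
        ‖ContinuousLinearMap.adjoint (sel S i m) *
            ∑ n ∈ Finset.univ.filter (fun n => m < n),
              sel S i n * ContinuousLinearMap.adjoint (sel S i n)‖) ^ 2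
      ≤ (⨆ i : Fin K → Bool, ‖∑ n, sel S i n * ContinuousLinearMap.adjoint (sel S i n)‖) *
        (⨆ i : Fin K → Bool,
          ‖(sel S i m * ContinuousLinearMap.adjoint (sel S i m)) *
              ∑ n ∈ Finset.univ.filter (fun n => m < n),
                sel S i n * ContinuousLinearMap.adjoint (sel S i n)‖) :=
  stmt4_general K S m
end

section
/- Let G_0^#(d) be the universal step-2 group on ℝ^{Y_d} and A_0(n) the polynomial sequence with [A_0(n)]_{l_1 0} = n^{l_1}, [A_0(n)]_{l_1 l_2} = 0 for l_2 ≥ 1. For x = (x_1,…,x_r), y = (y_1,…,y_r) ∈ ℝ^r, the product D(x,y) = A_0(x_1)^{-1}·A_0(y_1)·…·A_0(x_r)^{-1}·A_0(y_r) has coordinates: [D(x,y)]_{l_1 0} = Σ_{j=1}^r (y_j^{l_1} − x_j^{l_1}), and for l_2 ≥ 1, [D(x,y)]_{l_1 l_2} = Σ_{1 ≤ j_1 < j_2 ≤ r} (y_{j_1}^{l_1} − x_{j_1}^{l_1})(y_{j_2}^{l_2} − x_{j_2}^{l_2}) + Σ_{j=1}^r (x_j^{l_1+l_2} − x_j^{l_1}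 y_j^{l_2}). -/
/-- Index set `Y_d = {(l₁,l₂) : 0 ≤ l₂ < l₁ ≤ d}`. -/
def Yd (d : ℕ) := {p : Fin (d + 1) × Fin (d + 1) // p.2.val < p.1.val}

instance (d : ℕ) : DecidableEq (Yd d) := by unfold Yd; infer_instance
instance (d : ℕ) : Fintype (Yd d) := by unfold Yd; infer_instance

/-- The index `(l₁, 0)` associated to `p = (l₁, l₂) ∈ Y_d`. -/
def idxA {d : ℕ} (p : Yd d) : Yd d :=
  ⟨(p.val.1, 0), by simpa using Nat.lt_of_le_of_lt (Nat.zero_le _) p.prop⟩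

/-- The index `(l₂, 0)` associated to `p = (l₁, l₂) ∈ Y_d` with `l₂ ≠ 0`. -/
def idxB {d : ℕ} (p : Yd d) (h : p.val.2.val ≠ 0) : Yd d :=
  ⟨(p.val.2, 0), by simpa using Nat.pos_of_ne_zero h⟩

/-- The multiplication law of the universal step-2 nilpotent group `G₀^#(d)`:
`[x·y]_{l₁l₂} = x_{l₁l₂} + y_{l₁l₂}` if `l₂ = 0`, and
`[x·y]_{l₁l₂} = x_{l₁l₂} + y_{l₁l₂} + x_{l₁0}·y_{l₂0}` if `l₂ ≥ 1`. -/
def gmul {R : Type*} [CommRing R] {d : ℕ} (x y : Yd d → R) : Yd d → R := fun p =>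
  if h : p.val.2.val = 0 then x p + y p
  else x p + y p + x (idxA p) * y (idxB p h)

/-- The polynomial sequence `A₀(t)` with `[A₀(t)]_{l₁0} = t^{l₁}`, `[A₀(t)]_{l₁l₂} = 0` for
`l₂ ≥ 1`. -/
def A0 {d : ℕ} (t : ℝ) : Yd d → ℝ := fun p =>
  if p.val.2.val = 0 then t ^ p.val.1.val else 0

open scoped BigOperators

/-!
In `G₀^#(d)` the inverse of `A₀(t)` is explicit: its coordinates are `-t^{l₁}` on the first
layer and `t^{l₁+l₂}` on the second. Right multiplication by `A₀(s)⁻¹·A₀(t)` therefore adds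
`t^{l₁} - s^{l₁}` to each first-layer coordinate and
`acc_{l₁0}(t^{l₂} - s^{l₂}) + s^{l₁+l₂} - s^{l₁}t^{l₂}` to each second-layer coordinate, where
`acc_{l₁0}` is the first-layer coordinate accumulated so far. Peeling off the last factor, an
induction on `r` turns these partial sums `acc_{l₁0}` into the sum over `j₁ < j₂`.
-/

theorem Fin.sum_sum_filter_lt_succ {M : Type*} [AddCommMonoid M] {n : ℕ}
    (f : Fin (n + 1) → Fin (n + 1) → M) :
    ∑ j₂, ∑ j₁ ∈ Finset.univ.filter (fun j₁ => j₁ < j₂), f j₁ j₂ =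
      ∑ j₂ : Fin n, ∑ j₁ ∈ Finset.univ.filter (fun j₁ => j₁ < j₂),
          f j₁.castSucc j₂.castSucc +
        ∑ j₁ : Fin n, f j₁.castSucc (Fin.last n) := by
  simp only [Finset.filter_gt_eq_Iio]
  rw [Fin.sum_univ_castSucc, Fin.Iio_last_eq_map, Finset.sum_map]
  simp only [Fin.Iio_castSucc, Finset.sum_map, Fin.coe_castSuccEmb]

section StepTwo

variable {d : ℕ}

theorem idxA_fst (p : Yd d) : (idxA p).val.1.val = p.val.1.val := rfl

theorem idxA_snd (p : Yd d) : (idxA p).val.2.val = 0 := by simp [idxA]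

theorem idxB_fst (p : Yd d) (h : p.val.2.val ≠ 0) : (idxB p h).val.1.val = p.val.2.val := rfl

theorem idxB_snd (p : Yd d) (h : p.val.2.val ≠ 0) : (idxB p h).val.2.val = 0 := by
  simp [idxB]

theorem gmul_apply_of_snd_eq_zero {R : Type*} [CommRing R] (x y : Yd d → R) {p : Yd d}
    (hp : p.val.2.val = 0) : gmul x y p = x p + y p :=
  dif_pos hp

theorem gmul_apply_of_snd_ne_zero {R : Type*} [CommRing R] (x y : Yd d → R) {p : Yd d}
    (hp : p.val.2.val ≠ 0) : gmul x y p = x p + y p + x (idxA p) * y (idxB p hp) :=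
  dif_neg hp

theorem A0_apply_of_snd_eq_zero (t : ℝ) {p : Yd d} (hp : p.val.2.val = 0) :
    A0 t p = t ^ p.val.1.val :=
  if_pos hp

theorem A0_apply_of_snd_ne_zero (t : ℝ) {p : Yd d} (hp : p.val.2.val ≠ 0) : A0 t p = 0 :=
  if_neg hp

def A0Inv (t : ℝ) : Yd d → ℝ := fun p =>
  if p.val.2.val = 0 then -t ^ p.val.1.val else t ^ (p.val.1.val + p.val.2.val)

theorem eq_A0Inv_of_gmul_A0_eq_zero {a : Yd d → ℝ} {t : ℝ}
    (h : gmul a (A0 t) = fun _ => 0) : a = A0Inv t := by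
  have first_layer : ∀ q : Yd d, q.val.2.val = 0 → a q = -t ^ q.val.1.val := by
    intro q hq
    have hq' := congrFun h q
    rw [gmul_apply_of_snd_eq_zero _ _ hq, A0_apply_of_snd_eq_zero _ hq] at hq'
    linear_combination hq'
  funext p
  by_cases hp : p.val.2.val = 0
  · rw [first_layer p hp, A0Inv, if_pos hp]
  · have hp' := congrFun h p
    rw [gmul_apply_of_snd_ne_zero _ _ hp, A0_apply_of_snd_ne_zero _ hp,
      A0_apply_of_snd_eq_zero _ (idxB_snd p hp), first_layer _ (idxA_snd p), idxA_fst,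
      idxB_fst] at hp'
    rw [A0Inv, if_neg hp, pow_add]
    linear_combination hp'

theorem gmul_gmul_A0Inv_A0_apply (acc : Yd d → ℝ) (s t : ℝ) (p : Yd d) :
    gmul (gmul acc (A0Inv s)) (A0 t) p =
      if p.val.2.val = 0 then acc p + (t ^ p.val.1.val - s ^ p.val.1.val)
      else acc p + acc (idxA p) * (t ^ p.val.2.val - s ^ p.val.2.val) +
        (s ^ (p.val.1.val + p.val.2.val) - s ^ p.val.1.val * t ^ p.val.2.val) := by
  by_cases hp : p.val.2.val = 0
  · simp only [gmul_apply_of_snd_eq_zero _ _ hp, A0_apply_of_snd_eq_zero _ hp, A0Inv, if_pos hp]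
    ring
  · have hA := idxA_snd p
    have hB := idxB_snd p hp
    simp only [gmul_apply_of_snd_ne_zero _ _ hp, gmul_apply_of_snd_eq_zero _ _ hA,
      A0_apply_of_snd_ne_zero _ hp, A0_apply_of_snd_eq_zero _ hB, A0Inv, if_neg hp, if_pos hA,
      if_pos hB, idxA_fst, idxB_fst]
    ring

/-- The claimed coordinates of `D(x,y) = A₀(x₁)⁻¹·A₀(y₁)·…·A₀(x_r)⁻¹·A₀(y_r)`. -/
def dFormula {r : ℕ} (x y : Fin r → ℝ) : Yd d → ℝ := fun p =>
  if p.val.2.val = 0 then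
    ∑ j, (y j ^ p.val.1.val - x j ^ p.val.1.val)
  else
    (∑ j2, ∑ j1 ∈ Finset.univ.filter (fun j1 => j1 < j2),
        (y j1 ^ p.val.1.val - x j1 ^ p.val.1.val) *
          (y j2 ^ p.val.2.val - x j2 ^ p.val.2.val)) +
      ∑ j, (x j ^ (p.val.1.val + p.val.2.val) -
        x j ^ p.val.1.val * y j ^ p.val.2.val)

theorem dFormula_succ {r : ℕ} (x y : Fin (r + 1) → ℝ) :
    dFormula (d := d) x y =
      gmul (gmul (dFormula (x ∘ Fin.castSucc) (y ∘ Fin.castSucc)) (A0Inv (x (Fin.last r))))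
        (A0 (y (Fin.last r))) := by
  funext p
  rw [gmul_gmul_A0Inv_A0_apply]
  by_cases hp : p.val.2.val = 0
  · simp only [dFormula, if_pos hp, Fin.sum_univ_castSucc, Function.comp_apply]
  · simp only [dFormula, if_neg hp, if_pos (idxA_snd p), idxA_fst, Function.comp_apply]
    rw [Fin.sum_sum_filter_lt_succ, Fin.sum_univ_castSucc, Finset.sum_mul]
    ring

theorem foldl_gmul_A0Inv_A0 {r : ℕ} (x y : Fin r → ℝ) :
    (List.finRange r).foldl (fun acc j => gmul (gmul acc (A0Inv (x j))) (A0 (y j)))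
      (fun _ => 0) = dFormula (d := d) x y := by
  induction r with
  | zero =>
    funext p
    simp [dFormula]
  | succ r ih =>
    rw [List.finRange_succ_last, List.foldl_append, List.foldl_map, ih, dFormula_succ]
    rfl

end StepTwo

/-- for any function `Ainv` giving the group inverses of the `A₀(t)`, the product
`D(x,y) = A₀(x₁)⁻¹·A₀(y₁)·…·A₀(x_r)⁻¹·A₀(y_r)` has the stated explicit coordinates. -/
theorem stmt7 (d r : ℕ) (Ainv : ℝ → Yd d → ℝ)
    (hinv : ∀ t : ℝ,
      gmul (A0 (d := d) t) (Ainv t) = (fun _ => 0) ∧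
        gmul (Ainv t) (A0 (d := d) t) = (fun _ => 0))
    (x y : Fin r → ℝ) :
    (List.finRange r).foldl (fun acc j => gmul (gmul acc (Ainv (x j))) (A0 (y j)))
        (fun _ => 0)
      = fun p : Yd d =>
        if p.val.2.val = 0 then
          ∑ j, (y j ^ p.val.1.val - x j ^ p.val.1.val)
        else
          (∑ j2, ∑ j1 ∈ Finset.univ.filter (fun j1 => j1 < j2),
              (y j1 ^ p.val.1.val - x j1 ^ p.val.1.val) *
                (y j2 ^ p.val.2.val - x j2 ^ p.val.2.val)) +
            ∑ j, (x j ^ (p.val.1.val + p.val.2.val) -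
              x j ^ p.val.1.val * y j ^ p.val.2.val) := by
  obtain rfl : Ainv = A0Inv := funext fun t => eq_A0Inv_of_gmul_A0_eq_zero (hinv t).2
  exact foldl_gmul_A0Inv_A0 x y
end

section
/- Let K : ℝ → ℝ be C¹ and satisfy the Calderón–Zygmund conditions sup_t [(1+|t|)|K(t)| + (1+|t|)²|K'(t)|] ≤ 1 and sup_{N≥0} |∫_{−N}^{N} K(t) dt| ≤ 1. Let η_0 : ℝ → [0,1] be smooth, even, supported in [−2,2], equal to 1 on [−1,1], and set η_j(t) = η_0(2^{−j}t) − η_0(2^{−j+1}t) for j ≥ 1. Define c_j = 2(∫ K(t) Σ_{k=0}^{j−1} η_k(t) dt)/(∫ η_0(t) dt) and K_j(t) = K(t)η_j(t) + c_j 2^{−j} η_j(t) − c_{j+1} 2^{−j−1} η_{j+1}(t). Then for every j ≥ 1: ∫_ℝ K_j(t) dt = 0, sup_j |c_j| ≤ C (an absolute constant), and 2^j |K_j(t)| + 2^{2j} |K'_j(t)| ≤ C·1_{[−2^{j+3}, 2^{j+3}]}(t) for an absolute constant C. -/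
open scoped BigOperators
open MeasureTheory Set

private lemma absmul14 {a b A B : ℝ} (h : b ≠ 0 → |a| ≤ A) (hb : |b| ≤ B) (hA : 0 ≤ A) :
    |a * b| ≤ A * B := by
  by_cases hb0 : b = 0
  · have hB : 0 ≤ B := le_trans (abs_nonneg b) hb
    simp only [hb0, mul_zero, abs_zero]
    positivity
  · rw [abs_mul]; exact mul_le_mul (h hb0) hb (abs_nonneg b) hA

private lemma tri14 (a b c : ℝ) : |a + b - c| ≤ |a| + |b| + |c| := by
  have h1 : |a + b - c| ≤ |a + b| + |c| := by
    have h := abs_add_le (a + b) (-c)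
    simpa [sub_eq_add_neg] using h
  linarith [abs_add_le a b]

private lemma inv14 {a b : ℝ} (hb : 0 < b) (h : a * b ≤ 1) : a ≤ b⁻¹ := by
  rw [← one_div, le_div_iff₀ hb]; exact h

set_option maxHeartbeats 2000000 in
/-- properties of the dyadic decomposition of a Calderón–Zygmund kernel.
With `η_j`, `c_j`, `K_j` defined as in the paper from a fixed smooth cutoff `η₀`, there is a
constant `C` (independent of `j` and of the kernel `K`) such that for every `j ≥ 1`:
`∫ K_j = 0`, `|c_j| ≤ C`, and `2^j|K_j(t)| + 2^{2j}|K_j'(t)| ≤ C·1_{[-2^{j+3},2^{j+3}]}(t)`. -/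
theorem stmt14 (η₀ : ℝ → ℝ) (hη₀smooth : ContDiff ℝ (⊤ : ℕ∞) η₀)
    (hη₀range : ∀ t, 0 ≤ η₀ t ∧ η₀ t ≤ 1) (hη₀even : ∀ t, η₀ (-t) = η₀ t)
    (hη₀supp : ∀ t, 2 < |t| → η₀ t = 0) (hη₀one : ∀ t, |t| ≤ 1 → η₀ t = 1) :
    ∃ C : ℝ, 0 < C ∧
      ∀ K : ℝ → ℝ, ContDiff ℝ 1 K →
        (∀ t, (1 + |t|) * |K t| + (1 + |t|) ^ 2 * |deriv K t| ≤ 1) →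
        (∀ N : ℝ, 0 ≤ N → |∫ t in (-N)..N, K t| ≤ 1) →
        ∀ (η : ℕ → ℝ → ℝ),
          (∀ t, η 0 t = η₀ t) →
          (∀ k : ℕ, 1 ≤ k → ∀ t, η k t = η₀ (t / 2 ^ k) - η₀ (t / 2 ^ (k - 1))) →
          ∀ (c : ℕ → ℝ),
            (∀ j : ℕ, c j =
              2 * (∫ t, K t * ∑ k ∈ Finset.range j, η k t) / ∫ t, η₀ t) →
            ∀ (Kd : ℕ → ℝ → ℝ),
              (∀ j t, Kd j t = K t * η j t + c j * ((2 : ℝ) ^ j)⁻¹ * η j t -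
                c (j + 1) * ((2 : ℝ) ^ (j + 1))⁻¹ * η (j + 1) t) →
              ∀ j : ℕ, 1 ≤ j →
                (∫ t, Kd j t) = 0 ∧ |c j| ≤ C ∧
                  ∀ t, (2 : ℝ) ^ j * |Kd j t| + (2 : ℝ) ^ (2 * j) * |deriv (Kd j) t|
                    ≤ C * Set.indicator (Set.Icc (-(2 : ℝ) ^ (j + 3)) ((2 : ℝ) ^ (j + 3)))
                        (fun _ => 1) t := by
  classical
  have hη₀cont : Continuous η₀ := hη₀smooth.continuous
  have hη₀diff : Differentiable ℝ η₀ := hη₀smooth.differentiable (by simp)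
  have hη₀cs : HasCompactSupport η₀ := by
    apply HasCompactSupport.intro (isCompact_Icc (a := (-2 : ℝ)) (b := 2))
    intro x hx
    simp only [Set.mem_Icc, not_and_or, not_le] at hx
    apply hη₀supp
    rcases hx with h | h
    · rw [abs_of_neg (by linarith)]; linarith
    · rw [abs_of_pos (by linarith)]; linarith
  have hη₀int : Integrable η₀ := hη₀cont.integrable_of_hasCompactSupport hη₀cs
  set I₀ : ℝ := ∫ t, η₀ t with hI₀def
  have hI₀ : (2 : ℝ) ≤ I₀ := by
    have h1 : (∫ t in Set.Icc (-1 : ℝ) 1, η₀ t) = 2 := by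
      rw [setIntegral_congr_fun measurableSet_Icc (g := fun _ => (1 : ℝ))
        (fun x hx => hη₀one x (abs_le.mpr ⟨hx.1, hx.2⟩))]
      simp [Real.volume_Icc]
      norm_num
    calc (2 : ℝ) = ∫ t in Set.Icc (-1 : ℝ) 1, η₀ t := h1.symm
    _ ≤ I₀ := setIntegral_le_integral hη₀int (Filter.Eventually.of_forall fun t => (hη₀range t).1)
  have hI₀pos : 0 < I₀ := by linarith
  have hdcont : Continuous (deriv η₀) := hη₀smooth.continuous_deriv (by simp)
  obtain ⟨x₀, hx₀⟩ := (continuous_abs.comp hdcont).exists_forall_ge_of_hasCompactSupport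
    hη₀cs.deriv.abs
  set M : ℝ := |deriv η₀ x₀| with hMdef
  have hM : ∀ t, |deriv η₀ t| ≤ M := hx₀
  have hM0 : 0 ≤ M := abs_nonneg _
  have hder1 : ∀ x : ℝ, |x| < 1 → deriv η₀ x = 0 := by
    intro x hx
    have hmem : Metric.ball (0 : ℝ) 1 ∈ nhds x := Metric.isOpen_ball.mem_nhds (by
      simpa [Metric.mem_ball, Real.dist_eq] using hx)
    have heq : η₀ =ᶠ[nhds x] fun _ => (1 : ℝ) := by
      filter_upwards [hmem] with y hy
      exact hη₀one y (le_of_lt (by simpa [Metric.mem_ball, Real.dist_eq] using hy))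
    rw [heq.deriv_eq]; simp
  refine ⟨100 * (1 + M), by positivity, ?_⟩
  intro K hK hCZ hKN η hη0 hηk c hc Kd hKd j hj
  obtain ⟨p, rfl⟩ : ∃ p, j = p + 1 := ⟨j - 1, (Nat.succ_pred_eq_of_pos hj).symm⟩
  have hKcont : Continuous K := hK.continuous
  have hKb : ∀ t : ℝ, |K t| * (1 + |t|) ≤ 1 := by
    intro t
    have h := hCZ t
    nlinarith [abs_nonneg (deriv K t), sq_nonneg (1 + |t|), abs_nonneg t]
  have hK'b : ∀ t : ℝ, |deriv K t| * ((1 + |t|) * (1 + |t|)) ≤ 1 := by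
    intro t
    have h := hCZ t
    nlinarith [abs_nonneg (K t), abs_nonneg t]
  set g : ℕ → ℝ → ℝ := fun q t => η₀ (t / 2 ^ q) with hgdef
  have h2q : ∀ q : ℕ, (0 : ℝ) < 2 ^ q := fun q => by positivity
  have hgcont : ∀ q, Continuous (g q) := fun q => hη₀cont.comp (continuous_id.div_const _)
  have hgsupp : ∀ q (t : ℝ), 2 * 2 ^ q < |t| → g q t = 0 := by
    intro q t ht
    apply hη₀supp
    rw [abs_div, abs_of_pos (h2q q), lt_div_iff₀ (h2q q)]
    linarith
  have hgone : ∀ q (t : ℝ), |t| ≤ 2 ^ q → g q t = 1 := by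
    intro q t ht
    apply hη₀one
    rw [abs_div, abs_of_pos (h2q q), div_le_one (h2q q)]
    exact ht
  have hgrange : ∀ q (t : ℝ), 0 ≤ g q t ∧ g q t ≤ 1 := fun q t => hη₀range _
  have hgint : ∀ q (f : ℝ → ℝ), Continuous f → Integrable (fun t => f t * g q t) := by
    intro q f hf
    apply Continuous.integrable_of_hasCompactSupport (hf.mul (hgcont q))
    apply HasCompactSupport.intro (isCompact_Icc (a := -(2 * 2 ^ q : ℝ)) (b := (2 * 2 ^ q : ℝ)))
    intro x hx
    simp only [Set.mem_Icc, not_and_or, not_le] at hx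
    have hgt : 2 * 2 ^ q < |x| := by
      rcases hx with h | h
      · rw [abs_of_neg (by nlinarith [h2q q])]; linarith
      · rw [abs_of_pos (by nlinarith [h2q q])]; linarith
    simp [hgsupp q x hgt]
  have hgint1 : ∀ q, Integrable (g q) := by
    intro q
    simpa using hgint q (fun _ => 1) continuous_const
  have hgI : ∀ q, (∫ t, g q t) = 2 ^ q * I₀ := by
    intro q
    rw [hgdef]
    simp only
    rw [MeasureTheory.Measure.integral_comp_div η₀ (2 ^ q), abs_of_pos (h2q q), smul_eq_mul]
  have hA : ∀ q : ℕ, |∫ t, K t * g q t| ≤ 5 := by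
    intro q
    set R : ℝ := 2 ^ q with hR
    have hR1 : (1 : ℝ) ≤ R := one_le_pow₀ one_le_two
    have hR0 : (0 : ℝ) < R := by linarith
    set f : ℝ → ℝ := fun t => K t * g q t with hfdef
    have hfc : Continuous f := hKcont.mul (hgcont q)
    have hsupp : Function.support f ⊆ Set.Ioc (-(3 * R)) (3 * R) := by
      intro x hx
      rw [Function.mem_support] at hx
      by_contra hmem
      simp only [Set.mem_Ioc, not_and_or, not_lt, not_le] at hmem
      apply hx
      have hgt : 2 * R < |x| := by
        rcases hmem with h | h
        · rw [abs_of_neg (by nlinarith)]; linarith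
        · rw [abs_of_pos (by nlinarith)]; linarith
      show K x * g q x = 0
      rw [hgsupp q x hgt, mul_zero]
    rw [← intervalIntegral.integral_eq_integral_of_support_subset hsupp]
    have hii : ∀ a b : ℝ, IntervalIntegrable f volume a b := fun a b => hfc.intervalIntegrable a b
    have hsplit : (∫ x in (-(3 * R))..(3 * R), f x)
        = (∫ x in (-(3 * R))..(-R), f x) + ((∫ x in (-R)..R, f x)
          + ∫ x in R..(3 * R), f x) := by
      rw [intervalIntegral.integral_add_adjacent_intervals (hii _ _) (hii _ _),
        intervalIntegral.integral_add_adjacent_intervals (hii _ _) (hii _ _)]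
    have hbound : ∀ x : ℝ, R ≤ |x| → ‖f x‖ ≤ 1 / R := by
      intro x hx
      have h1 : |g q x| ≤ 1 := abs_le.mpr ⟨by linarith [(hgrange q x).1], (hgrange q x).2⟩
      have h2 := hKb x
      rw [Real.norm_eq_abs, le_div_iff₀ hR0]
      have : |f x| = |K x| * |g q x| := by rw [hfdef]; exact abs_mul _ _
      rw [this]
      nlinarith [mul_le_mul_of_nonneg_left h1 (abs_nonneg (K x)), hR0.le, abs_nonneg x,
        abs_nonneg (K x), mul_nonneg (abs_nonneg (K x)) (abs_nonneg (g q x))]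
    have hleft : |∫ x in (-(3 * R))..(-R), f x| ≤ 2 := by
      have h := intervalIntegral.norm_integral_le_of_norm_le_const (C := 1 / R)
        (f := f) (a := -(3 * R)) (b := -R) ?_
      · rw [Real.norm_eq_abs] at h
        have he : |(-R) - (-(3 * R))| = 2 * R := by rw [abs_of_pos (by linarith)]; ring
        rw [he] at h
        calc |∫ x in (-(3 * R))..(-R), f x| ≤ 1 / R * (2 * R) := h
        _ = 2 := by field_simp
      · intro x hx
        rw [Set.uIoc_of_le (by linarith : -(3 * R) ≤ -R)] at hx
        exact hbound x (by rw [abs_of_neg (by linarith [hx.2])]; linarith [hx.2])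
    have hright : |∫ x in R..(3 * R), f x| ≤ 2 := by
      have h := intervalIntegral.norm_integral_le_of_norm_le_const (C := 1 / R)
        (f := f) (a := R) (b := 3 * R) ?_
      · rw [Real.norm_eq_abs] at h
        have he : |(3 * R) - R| = 2 * R := by rw [abs_of_pos (by linarith)]; ring
        rw [he] at h
        calc |∫ x in R..(3 * R), f x| ≤ 1 / R * (2 * R) := h
        _ = 2 := by field_simp
      · intro x hx
        rw [Set.uIoc_of_le (by linarith : R ≤ 3 * R)] at hx
        exact hbound x (by rw [abs_of_pos (by linarith [hx.1])]; linarith [hx.1])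
    have hmid : |∫ x in (-R)..R, f x| ≤ 1 := by
      have heq : (∫ x in (-R)..R, f x) = ∫ x in (-R)..R, K x := by
        apply intervalIntegral.integral_congr
        intro x hx
        rw [Set.uIcc_of_le (by linarith : -R ≤ R)] at hx
        show K x * g q x = K x
        rw [hgone q x (abs_le.mpr ⟨hx.1, hx.2⟩), mul_one]
      rw [heq]
      exact hKN R (by linarith)
    rw [hsplit]
    calc |(∫ x in (-(3 * R))..(-R), f x) + ((∫ x in (-R)..R, f x) + ∫ x in R..(3 * R), f x)|
        ≤ |∫ x in (-(3 * R))..(-R), f x| + (|∫ x in (-R)..R, f x| + |∫ x in R..(3 * R), f x|) :=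
          (abs_add_le _ _).trans (by gcongr; exact abs_add_le _ _)
    _ ≤ 5 := by linarith
  have hSj : ∀ m : ℕ, 1 ≤ m → ∀ t, (∑ k ∈ Finset.range m, η k t) = η₀ (t / 2 ^ (m - 1)) := by
    intro m hm
    induction m, hm using Nat.le_induction with
    | base => intro t; simp [hη0 t]
    | succ n hn ih =>
      intro t
      rw [Finset.sum_range_succ, ih t, hηk n hn t]
      simp
  have hceq : ∀ q : ℕ, c (q + 1) = 2 * (∫ t, K t * g q t) / I₀ := by
    intro q
    rw [hc (q + 1)]
    have he : (fun t => K t * ∑ k ∈ Finset.range (q + 1), η k t) = fun t => K t * g q t := by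
      funext t
      rw [hSj (q + 1) (by omega) t]
      simp [hgdef]
    rw [he]
  have hcb : ∀ q : ℕ, |c (q + 1)| ≤ 5 := by
    intro q
    rw [hceq q, abs_div, abs_of_pos hI₀pos, div_le_iff₀ hI₀pos, abs_mul, abs_two]
    have := hA q
    nlinarith [abs_nonneg (∫ t, K t * g q t)]
  have hηj : ∀ q : ℕ, ∀ t, η (q + 1) t = g (q + 1) t - g q t := by
    intro q t
    rw [hηk (q + 1) (by omega) t]
    simp [hgdef]
  have hKdfun : Kd (p + 1) = fun s =>
      K s * (g (p + 1) s - g p s)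
      + (c (p + 1) * ((2 : ℝ) ^ (p + 1))⁻¹) * (g (p + 1) s - g p s)
      - (c (p + 2) * ((2 : ℝ) ^ (p + 2))⁻¹) * (g (p + 2) s - g (p + 1) s) := by
    funext s
    rw [hKd, hηj p s, hηj (p + 1) s]
  -- the integral is zero
  have hint0 : Integrable (fun t => K t * g p t) := hgint p K hKcont
  have hint1 : Integrable (fun t => K t * g (p + 1) t) := hgint (p + 1) K hKcont
  have hmulsub : ∀ (f u v : ℝ → ℝ), (fun s => f s * (u s - v s))
      = fun s => f s * u s - f s * v s := by
    intro f u v; funext s; ring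
  have hIz : (∫ t, Kd (p + 1) t) = 0 := by
    rw [hKdfun]
    have e1 : Integrable (fun s => K s * (g (p + 1) s - g p s)) := by
      rw [hmulsub]; exact hint1.sub hint0
    have e2 : Integrable (fun s => (c (p + 1) * ((2 : ℝ) ^ (p + 1))⁻¹) * (g (p + 1) s - g p s)) :=
      ((hgint1 (p + 1)).sub (hgint1 p)).const_mul _
    have e3 : Integrable (fun s => (c (p + 2) * ((2 : ℝ) ^ (p + 2))⁻¹) * (g (p + 2) s - g (p + 1) s)) :=
      ((hgint1 (p + 2)).sub (hgint1 (p + 1))).const_mul _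
    have e12 : Integrable (fun s => K s * (g (p + 1) s - g p s)
        + (c (p + 1) * ((2 : ℝ) ^ (p + 1))⁻¹) * (g (p + 1) s - g p s)) := e1.add e2
    rw [MeasureTheory.integral_sub e12 e3, MeasureTheory.integral_add e1 e2]
    have v1 : (∫ s, K s * (g (p + 1) s - g p s))
        = (∫ t, K t * g (p + 1) t) - ∫ t, K t * g p t := by
      rw [hmulsub]; exact MeasureTheory.integral_sub hint1 hint0
    have v2 : (∫ s, (c (p + 1) * ((2 : ℝ) ^ (p + 1))⁻¹) * (g (p + 1) s - g p s))
        = (c (p + 1) * ((2 : ℝ) ^ (p + 1))⁻¹) * (2 ^ (p + 1) * I₀ - 2 ^ p * I₀) := by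
      rw [MeasureTheory.integral_const_mul,
        MeasureTheory.integral_sub (hgint1 (p + 1)) (hgint1 p), hgI, hgI]
    have v3 : (∫ s, (c (p + 2) * ((2 : ℝ) ^ (p + 2))⁻¹) * (g (p + 2) s - g (p + 1) s))
        = (c (p + 2) * ((2 : ℝ) ^ (p + 2))⁻¹) * (2 ^ (p + 2) * I₀ - 2 ^ (p + 1) * I₀) := by
      rw [MeasureTheory.integral_const_mul,
        MeasureTheory.integral_sub (hgint1 (p + 2)) (hgint1 (p + 1)), hgI, hgI]
    rw [v1, v2, v3, hceq p, hceq (p + 1)]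
    have hpne : ((2 : ℝ) ^ p) ≠ 0 := (h2q p).ne'
    field_simp
    ring
  refine ⟨hIz, (hcb p).trans (by nlinarith), ?_⟩
  -- pointwise bounds
  intro t
  set P : ℝ := 2 ^ p with hPdef
  have hP : 0 < P := h2q p
  have eP1 : (2 : ℝ) ^ (p + 1) = 2 * P := by rw [pow_succ]; ring
  have eP2 : (2 : ℝ) ^ (p + 2) = 4 * P := by rw [pow_succ, pow_succ]; ring
  have eP3 : (2 : ℝ) ^ (p + 3) = 8 * P := by rw [pow_succ, pow_succ, pow_succ]; ring
  have eP4 : (2 : ℝ) ^ (p + 1 + 3) = 16 * P := by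
    rw [show p + 1 + 3 = p + 4 from rfl, pow_succ, pow_succ, pow_succ, pow_succ]; ring
  have eP2j : (2 : ℝ) ^ (2 * (p + 1)) = 4 * (P * P) := by
    rw [show 2 * (p + 1) = (p + 1) + (p + 1) by ring, pow_add, eP1]; ring
  by_cases ht : |t| ≤ (2 : ℝ) ^ (p + 1 + 3)
  · -- main case: inside the interval
    have hind : Set.indicator (Set.Icc (-(2 : ℝ) ^ (p + 1 + 3)) ((2 : ℝ) ^ (p + 1 + 3)))
        (fun _ => (1 : ℝ)) t = 1 := by
      apply Set.indicator_of_mem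
      rw [Set.mem_Icc]
      exact ⟨(abs_le.mp ht).1, (abs_le.mp ht).2⟩
    -- support facts
    have hgDiffne : ∀ q : ℕ, (g (q + 1) t - g q t ≠ 0) → (2 : ℝ) ^ q ≤ |t| := by
      intro q hne
      by_contra hlt
      push_neg at hlt
      apply hne
      have h1 : g q t = 1 := hgone q t hlt.le
      have h2 : g (q + 1) t = 1 := hgone (q + 1) t (by rw [pow_succ]; nlinarith [h2q q])
      rw [h1, h2, sub_self]
    have hKsm : ∀ q : ℕ, (2 : ℝ) ^ q ≤ |t| → |K t| ≤ ((2 : ℝ) ^ q)⁻¹ := by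
      intro q hq
      apply inv14 (h2q q)
      have := hKb t
      nlinarith [abs_nonneg (K t)]
    have hK'sm : ∀ q : ℕ, (2 : ℝ) ^ q ≤ |t| → |deriv K t| ≤ (((2 : ℝ) ^ q) * ((2 : ℝ) ^ q))⁻¹ := by
      intro q hq
      apply inv14 (by positivity)
      have := hK'b t
      nlinarith [abs_nonneg (deriv K t), h2q q, abs_nonneg t]
    have habsu1 : |g (p + 1) t - g p t| ≤ 1 := by
      have h1 := hgrange (p + 1) t; have h2 := hgrange p t
      rw [abs_le]; constructor <;> [linarith [h1.1, h2.2]; linarith [h1.2, h2.1]]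
    -- value bound
    have hKval : |Kd (p + 1) t| ≤ 5 * P⁻¹ := by
      rw [hKdfun]
      have T1 : |K t * (g (p + 1) t - g p t)| ≤ P⁻¹ * 1 := by
        apply absmul14 (fun hne => ?_) habsu1 (by positivity)
        exact hKsm p (hgDiffne p hne)
      have T2 : |(c (p + 1) * ((2 : ℝ) ^ (p + 1))⁻¹) * (g (p + 1) t - g p t)|
          ≤ (5 * (2 * P)⁻¹) * 1 := by
        apply absmul14 (fun _ => ?_) habsu1 (by positivity)
        rw [abs_mul, eP1, abs_of_pos (by positivity : (0:ℝ) < (2 * P)⁻¹)]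
        exact mul_le_mul_of_nonneg_right (hcb p) (by positivity)
      have habsu2 : |g (p + 2) t - g (p + 1) t| ≤ 1 := by
        have h1 := hgrange (p + 2) t; have h2 := hgrange (p + 1) t
        rw [abs_le]; constructor <;> [linarith [h1.1, h2.2]; linarith [h1.2, h2.1]]
      have T3 : |(c (p + 2) * ((2 : ℝ) ^ (p + 2))⁻¹) * (g (p + 2) t - g (p + 1) t)|
          ≤ (5 * (4 * P)⁻¹) * 1 := by
        apply absmul14 (fun _ => ?_) habsu2 (by positivity)
        rw [abs_mul, eP2, abs_of_pos (by positivity : (0:ℝ) < (4 * P)⁻¹)]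
        exact mul_le_mul_of_nonneg_right (hcb (p + 1)) (by positivity)
      have hiP : 0 < P⁻¹ := by positivity
      refine le_trans (tri14 _ _ _) ?_
      have e1 : (2 * P)⁻¹ = 2⁻¹ * P⁻¹ := by rw [mul_inv]
      have e2 : (4 * P)⁻¹ = 4⁻¹ * P⁻¹ := by rw [mul_inv]
      rw [e1] at T2
      rw [e2] at T3
      linarith [T1, T2, T3, hiP.le]
    -- derivative bound
    have hgD : ∀ q (s : ℝ), HasDerivAt (g q) (deriv η₀ (s / 2 ^ q) * ((2 : ℝ) ^ q)⁻¹) s := by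
      intro q s
      have h1 : HasDerivAt η₀ (deriv η₀ (s / 2 ^ q)) (s / 2 ^ q) := (hη₀diff _).hasDerivAt
      have h2 : HasDerivAt (fun x : ℝ => x / 2 ^ q) (1 / 2 ^ q) s := (hasDerivAt_id s).div_const _
      have h3 := h1.comp s h2
      rw [one_div] at h3
      exact h3
    set D : ℕ → ℝ := fun q => deriv η₀ (t / 2 ^ q) * ((2 : ℝ) ^ q)⁻¹ with hDdef
    have hu1D : HasDerivAt (fun s => g (p + 1) s - g p s) (D (p + 1) - D p) t :=
      (hgD (p + 1) t).sub (hgD p t)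
    have hu2D : HasDerivAt (fun s => g (p + 2) s - g (p + 1) s) (D (p + 2) - D (p + 1)) t :=
      (hgD (p + 2) t).sub (hgD (p + 1) t)
    have hKt : HasDerivAt K (deriv K t) t := (hK.differentiable one_ne_zero t).hasDerivAt
    have hmain : HasDerivAt (Kd (p + 1))
        ((deriv K t * (g (p + 1) t - g p t) + K t * (D (p + 1) - D p))
          + (c (p + 1) * ((2 : ℝ) ^ (p + 1))⁻¹) * (D (p + 1) - D p)
          - (c (p + 2) * ((2 : ℝ) ^ (p + 2))⁻¹) * (D (p + 2) - D (p + 1))) t := by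
      rw [hKdfun]
      exact ((hKt.mul hu1D).add (hu1D.const_mul _)).sub (hu2D.const_mul _)
    have hdKd := hmain.deriv
    have hD0 : ∀ q, |t| < (2 : ℝ) ^ q → D q = 0 := by
      intro q hlt
      have : deriv η₀ (t / 2 ^ q) = 0 := by
        apply hder1
        rw [abs_div, abs_of_pos (h2q q), div_lt_one (h2q q)]
        exact hlt
      rw [hDdef]
      simp only [this, zero_mul]
    have hDb : ∀ q, |D q| ≤ M * ((2 : ℝ) ^ q)⁻¹ := by
      intro q
      rw [hDdef]
      simp only
      rw [abs_mul, abs_of_pos (inv_pos.mpr (h2q q))]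
      exact mul_le_mul_of_nonneg_right (hM _) (by positivity)
    have hDsubne : ∀ q, D (q + 1) - D q ≠ 0 → (2 : ℝ) ^ q ≤ |t| := by
      intro q hne
      by_contra hlt
      push_neg at hlt
      apply hne
      rw [hD0 q hlt, hD0 (q + 1) (by rw [pow_succ]; nlinarith [h2q q]), sub_self]
    have hiP : (0 : ℝ) < P⁻¹ := by positivity
    have hDd1 : |D (p + 1) - D p| ≤ M * (2⁻¹ * P⁻¹) + M * P⁻¹ := by
      refine (abs_sub _ _).trans ?_
      have b1 := hDb (p + 1); have b2 := hDb p
      rw [eP1, mul_inv] at b1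
      exact add_le_add b1 b2
    have hDd2 : |D (p + 2) - D (p + 1)| ≤ M * (4⁻¹ * P⁻¹) + M * (2⁻¹ * P⁻¹) := by
      refine (abs_sub _ _).trans ?_
      have b1 := hDb (p + 2); have b2 := hDb (p + 1)
      rw [eP2, mul_inv] at b1
      rw [eP1, mul_inv] at b2
      exact add_le_add b1 b2
    have B1 : |deriv K t * (g (p + 1) t - g p t)| ≤ (P * P)⁻¹ * 1 :=
      absmul14 (fun hne => hK'sm p (hgDiffne p hne)) habsu1 (by positivity)
    have B2 : |K t * (D (p + 1) - D p)| ≤ P⁻¹ * (M * (2⁻¹ * P⁻¹) + M * P⁻¹) :=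
      absmul14 (fun hne => hKsm p (hDsubne p hne)) hDd1 hiP.le
    have B3 : |(c (p + 1) * ((2 : ℝ) ^ (p + 1))⁻¹) * (D (p + 1) - D p)|
        ≤ (5 * (2⁻¹ * P⁻¹)) * (M * (2⁻¹ * P⁻¹) + M * P⁻¹) := by
      apply absmul14 (fun _ => ?_) hDd1 (by positivity)
      rw [abs_mul, eP1, mul_inv, abs_of_pos (by positivity : (0:ℝ) < 2⁻¹ * P⁻¹)]
      exact mul_le_mul_of_nonneg_right (hcb p) (by positivity)
    have B4 : |(c (p + 2) * ((2 : ℝ) ^ (p + 2))⁻¹) * (D (p + 2) - D (p + 1))|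
        ≤ (5 * (4⁻¹ * P⁻¹)) * (M * (4⁻¹ * P⁻¹) + M * (2⁻¹ * P⁻¹)) := by
      apply absmul14 (fun _ => ?_) hDd2 (by positivity)
      rw [abs_mul, eP2, mul_inv, abs_of_pos (by positivity : (0:ℝ) < 4⁻¹ * P⁻¹)]
      exact mul_le_mul_of_nonneg_right (hcb (p + 1)) (by positivity)
    have hDval : |deriv (Kd (p + 1)) t| ≤ (1 + 10 * M) * (P⁻¹ * P⁻¹) := by
      rw [hdKd]
      refine le_trans (tri14 _ _ _) ?_
      have htriA : |deriv K t * (g (p + 1) t - g p t) + K t * (D (p + 1) - D p)|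
          ≤ |deriv K t * (g (p + 1) t - g p t)| + |K t * (D (p + 1) - D p)| := abs_add_le _ _
      have hPP : (P * P)⁻¹ = P⁻¹ * P⁻¹ := mul_inv _ _
      rw [hPP] at B1
      nlinarith [B1, B2, B3, B4, htriA, mul_nonneg hM0 (mul_nonneg hiP.le hiP.le), hM0,
        mul_nonneg hiP.le hiP.le]
    rw [hind, eP1, eP2j]
    have h1 : 2 * P * |Kd (p + 1) t| ≤ 10 := by
      calc 2 * P * |Kd (p + 1) t| ≤ 2 * P * (5 * P⁻¹) :=
        mul_le_mul_of_nonneg_left hKval (by positivity)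
      _ = 10 := by field_simp; ring
    have h2 : 4 * (P * P) * |deriv (Kd (p + 1)) t| ≤ 4 + 40 * M := by
      calc 4 * (P * P) * |deriv (Kd (p + 1)) t|
          ≤ 4 * (P * P) * ((1 + 10 * M) * (P⁻¹ * P⁻¹)) :=
            mul_le_mul_of_nonneg_left hDval (by positivity)
      _ = 4 + 40 * M := by field_simp; ring
    linarith [h1, h2, hM0]
  · -- outside the interval : everything vanishes
    have hU : ∀ s : ℝ, 8 * P < |s| → Kd (p + 1) s = 0 := by
      intro s hs
      have h0 : g p s = 0 := hgsupp p s (by rw [← hPdef]; nlinarith [hP])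
      have h1 : g (p + 1) s = 0 := hgsupp (p + 1) s (by rw [pow_succ, ← hPdef]; nlinarith [hP])
      have h2 : g (p + 2) s = 0 := hgsupp (p + 2) s
        (by rw [pow_succ, pow_succ, ← hPdef]; nlinarith [hP])
      rw [hKdfun]
      simp [h0, h1, h2]
    push_neg at ht
    rw [eP4] at ht
    have ht8 : 8 * P < |t| := by nlinarith [hP]
    have hKd0 : Kd (p + 1) t = 0 := hU t ht8
    have hder0 : deriv (Kd (p + 1)) t = 0 := by
      have hopen : IsOpen {s : ℝ | 8 * P < |s|} := isOpen_lt continuous_const continuous_abs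
      have heq : Kd (p + 1) =ᶠ[nhds t] fun _ => (0 : ℝ) := by
        filter_upwards [hopen.mem_nhds ht8] with s hs using hU s hs
      rw [heq.deriv_eq]
      simp
    have hnotmem : t ∉ Set.Icc (-(2 : ℝ) ^ (p + 1 + 3)) ((2 : ℝ) ^ (p + 1 + 3)) := by
      intro hmem
      rw [Set.mem_Icc] at hmem
      have : |t| ≤ (2 : ℝ) ^ (p + 1 + 3) := abs_le.mpr ⟨hmem.1, hmem.2⟩
      rw [eP4] at this
      linarith
    rw [hKd0, hder0, Set.indicator_of_notMem hnotmem]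
    simp
end
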